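/- arXiv:2305.01530 — 4 statements merged into one kernel-verified Lean document; each statement's English description precedes it below -/
import Mathlib

section
/- Let Q = (x³ + y³ + z³)·(x³ + y³) in ℂ[x,y,z]. If a, b, c ∈ ℂ[x,y,z] are polynomials of degree at most 1 satisfying a·(∂Q/∂x) + b·(∂Q/∂y) + c·(∂Q/∂z) = 0, then a = b = c = 0. -/
open MvPolynomial

lemma fin3_classify (m : Fin 3 →₀ ℕ) (h : m 0 + m 1 + m 2 ≤ 1) :
    m = 0 ∨ m = Finsupp.single 0 1 ∨ m = Finsupp.single 1 1 ∨ m = Finsupp.single 2 1 := by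
  have h0 : m 0 ≤ 1 := by omega
  have h1 : m 1 ≤ 1 := by omega
  have h2 : m 2 ≤ 1 := by omega
  interval_cases hm0 : m 0 <;> interval_cases hm1 : m 1 <;> interval_cases hm2 : m 2 <;>
    [ (left; ext i; fin_cases i <;> simp_all);
      (right; right; right; ext i; fin_cases i <;> simp_all [Finsupp.single_apply]);
      (right; right; left; ext i; fin_cases i <;> simp_all [Finsupp.single_apply]);
      omega;
      (right; left; ext i; fin_cases i <;> simp_all [Finsupp.single_apply]);
      omega; omega; omega]

lemma linear_rep (p : MvPolynomial (Fin 3) ℂ) (hp : p.totalDegree ≤ 1) :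
    p = C (coeff 0 p) + C (coeff (Finsupp.single 0 1) p) * X 0
      + C (coeff (Finsupp.single 1 1) p) * X 1 + C (coeff (Finsupp.single 2 1) p) * X 2 := by
  ext m
  rw [coeff_add, coeff_add, coeff_add, coeff_C_mul, coeff_C_mul, coeff_C_mul,
    coeff_X', coeff_X', coeff_X', coeff_C]
  by_cases hd : m 0 + m 1 + m 2 ≤ 1
  · rcases fin3_classify m hd with rfl | rfl | rfl | rfl
    · simp
    all_goals simp [Finsupp.single_eq_single_iff, eq_comm (a := (0 : Fin 3 →₀ ℕ)),
      Finsupp.single_eq_zero]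
  · have hz : coeff m p = 0 := by
      by_contra hne
      have := le_totalDegree (p := p) (s := m) (by rwa [mem_support_iff])
      have hsum : m.sum (fun _ e => e) = m 0 + m 1 + m 2 := by
        rw [Finsupp.sum_fintype _ _ (fun _ => rfl), Fin.sum_univ_three]
      omega
    rw [hz]
    have h0 : ¬ (0 : Fin 3 →₀ ℕ) = m := by rintro rfl; simp at hd
    have h1 : ¬ Finsupp.single (0:Fin 3) 1 = m := by rintro rfl; simp [Finsupp.single_apply] at hd
    have h2 : ¬ Finsupp.single (1:Fin 3) 1 = m := by rintro rfl; simp [Finsupp.single_apply] at hd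
    have h3 : ¬ Finsupp.single (2:Fin 3) 1 = m := by rintro rfl; simp [Finsupp.single_apply] at hd
    simp [h0, h1, h2, h3]


set_option maxHeartbeats 1600000 in
/-- The defining polynomial of `EL₆` has no nonzero Jacobian syzygy of degree ≤ 1. -/
theorem no_low_degree_syzygy_EL6
    (Q : MvPolynomial (Fin 3) ℂ)
    (hQ : Q = ((X 0) ^ 3 + (X 1) ^ 3 + (X 2) ^ 3) * ((X 0) ^ 3 + (X 1) ^ 3))
    (a b c : MvPolynomial (Fin 3) ℂ)
    (ha : a.totalDegree ≤ 1) (hb : b.totalDegree ≤ 1) (hc : c.totalDegree ≤ 1)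
    (hsyz : a * pderiv 0 Q + b * pderiv 1 Q + c * pderiv 2 Q = 0) :
    a = 0 ∧ b = 0 ∧ c = 0 := by
  have hQx : pderiv 0 Q = 6 * X 0 ^ 5 + 6 * X 0 ^ 2 * X 1 ^ 3 + 3 * X 0 ^ 2 * X 2 ^ 3 := by
    rw [hQ]; simp [pderiv_mul, Derivation.leibniz_pow, pderiv_X, Pi.single_apply]; ring
  have hQy : pderiv 1 Q = 6 * X 0 ^ 3 * X 1 ^ 2 + 6 * X 1 ^ 5 + 3 * X 1 ^ 2 * X 2 ^ 3 := by
    rw [hQ]; simp [pderiv_mul, Derivation.leibniz_pow, pderiv_X, Pi.single_apply]; ring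
  have hQz : pderiv 2 Q = 3 * X 0 ^ 3 * X 2 ^ 2 + 3 * X 1 ^ 3 * X 2 ^ 2 := by
    rw [hQ]; simp [pderiv_mul, Derivation.leibniz_pow, pderiv_X, Pi.single_apply]; ring
  have ra := linear_rep a ha
  have rb := linear_rep b hb
  have rc := linear_rep c hc
  set a0 := coeff 0 a with ha0
  set a1 := coeff (Finsupp.single 0 1) a with ha1
  set a2 := coeff (Finsupp.single 1 1) a with ha2
  set a3 := coeff (Finsupp.single 2 1) a with ha3
  set b0 := coeff 0 b with hb0
  set b1 := coeff (Finsupp.single 0 1) b with hb1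
  set b2 := coeff (Finsupp.single 1 1) b with hb2
  set b3 := coeff (Finsupp.single 2 1) b with hb3
  set c0 := coeff 0 c with hc0
  set c1 := coeff (Finsupp.single 0 1) c with hc1
  set c2 := coeff (Finsupp.single 1 1) c with hc2
  set c3 := coeff (Finsupp.single 2 1) c with hc3
  rw [ra, rb, rc, hQx, hQy, hQz] at hsyz
  have h1 := congrArg (eval (![1,1,1] : Fin 3 → ℂ)) hsyz
  simp only [map_add, map_mul, map_pow, eval_C, eval_X, map_ofNat, map_zero, map_neg,
    Matrix.cons_val_zero, Matrix.cons_val_one, Matrix.head_cons, Matrix.cons_val_two,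
    Matrix.tail_cons] at h1
  have h2 := congrArg (eval (![1,2,1] : Fin 3 → ℂ)) hsyz
  simp only [map_add, map_mul, map_pow, eval_C, eval_X, map_ofNat, map_zero, map_neg,
    Matrix.cons_val_zero, Matrix.cons_val_one, Matrix.head_cons, Matrix.cons_val_two,
    Matrix.tail_cons] at h2
  have h3 := congrArg (eval (![2,1,1] : Fin 3 → ℂ)) hsyz
  simp only [map_add, map_mul, map_pow, eval_C, eval_X, map_ofNat, map_zero, map_neg,
    Matrix.cons_val_zero, Matrix.cons_val_one, Matrix.head_cons, Matrix.cons_val_two,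
    Matrix.tail_cons] at h3
  have h4 := congrArg (eval (![1,1,2] : Fin 3 → ℂ)) hsyz
  simp only [map_add, map_mul, map_pow, eval_C, eval_X, map_ofNat, map_zero, map_neg,
    Matrix.cons_val_zero, Matrix.cons_val_one, Matrix.head_cons, Matrix.cons_val_two,
    Matrix.tail_cons] at h4
  have h5 := congrArg (eval (![-1,2,1] : Fin 3 → ℂ)) hsyz
  simp only [map_add, map_mul, map_pow, eval_C, eval_X, map_ofNat, map_zero, map_neg,
    Matrix.cons_val_zero, Matrix.cons_val_one, Matrix.head_cons, Matrix.cons_val_two,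
    Matrix.tail_cons] at h5
  have h6 := congrArg (eval (![2,-1,1] : Fin 3 → ℂ)) hsyz
  simp only [map_add, map_mul, map_pow, eval_C, eval_X, map_ofNat, map_zero, map_neg,
    Matrix.cons_val_zero, Matrix.cons_val_one, Matrix.head_cons, Matrix.cons_val_two,
    Matrix.tail_cons] at h6
  have h7 := congrArg (eval (![1,-2,1] : Fin 3 → ℂ)) hsyz
  simp only [map_add, map_mul, map_pow, eval_C, eval_X, map_ofNat, map_zero, map_neg,
    Matrix.cons_val_zero, Matrix.cons_val_one, Matrix.head_cons, Matrix.cons_val_two,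
    Matrix.tail_cons] at h7
  have h8 := congrArg (eval (![3,1,1] : Fin 3 → ℂ)) hsyz
  simp only [map_add, map_mul, map_pow, eval_C, eval_X, map_ofNat, map_zero, map_neg,
    Matrix.cons_val_zero, Matrix.cons_val_one, Matrix.head_cons, Matrix.cons_val_two,
    Matrix.tail_cons] at h8
  have h9 := congrArg (eval (![1,3,1] : Fin 3 → ℂ)) hsyz
  simp only [map_add, map_mul, map_pow, eval_C, eval_X, map_ofNat, map_zero, map_neg,
    Matrix.cons_val_zero, Matrix.cons_val_one, Matrix.head_cons, Matrix.cons_val_two,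
    Matrix.tail_cons] at h9
  have h10 := congrArg (eval (![1,1,3] : Fin 3 → ℂ)) hsyz
  simp only [map_add, map_mul, map_pow, eval_C, eval_X, map_ofNat, map_zero, map_neg,
    Matrix.cons_val_zero, Matrix.cons_val_one, Matrix.head_cons, Matrix.cons_val_two,
    Matrix.tail_cons] at h10
  have h11 := congrArg (eval (![2,2,1] : Fin 3 → ℂ)) hsyz
  simp only [map_add, map_mul, map_pow, eval_C, eval_X, map_ofNat, map_zero, map_neg,
    Matrix.cons_val_zero, Matrix.cons_val_one, Matrix.head_cons, Matrix.cons_val_two,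
    Matrix.tail_cons] at h11
  have h12 := congrArg (eval (![1,2,3] : Fin 3 → ℂ)) hsyz
  simp only [map_add, map_mul, map_pow, eval_C, eval_X, map_ofNat, map_zero, map_neg,
    Matrix.cons_val_zero, Matrix.cons_val_one, Matrix.head_cons, Matrix.cons_val_two,
    Matrix.tail_cons] at h12
  have ea0 : a0 = 0 := by linear_combination ((-971756333 : ℂ)/5192560800) * h1 + ((-359017513 : ℂ)/24664663800) * h2 + ((31982729 : ℂ)/8221554600) * h3 + ((9 : ℂ)/160) * h4 + ((30429349 : ℂ)/2596280400) * h5 + ((105550967 : ℂ)/7788841200) * h6 + ((5 : ℂ)/4842) * h7 + ((-7141291 : ℂ)/2934086400) * h8 + ((-754236079 : ℂ)/789269241600) * h9 + ((-13 : ℂ)/720) * h10 + ((531236131 : ℂ)/49848583680) * h11 + ((1 : ℂ)/810) * h12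
  have ea1 : a1 = 0 := by linear_combination ((3642557 : ℂ)/259628040) * h1 + ((343229 : ℂ)/411077730) * h2 + ((-813653 : ℂ)/205538865) * h3 + ((-380333 : ℂ)/389442060) * h5 + ((-361183 : ℂ)/389442060) * h6 + ((-29 : ℂ)/84735) * h7 + ((36923 : ℂ)/48901440) * h8 + ((5186813 : ℂ)/39463462080) * h9 + ((-239473 : ℂ)/276936576) * h11
  have ea2 : a2 = 0 := by linear_combination ((368569 : ℂ)/32453505) * h1 + ((-2153051 : ℂ)/411077730) * h2 + ((188529 : ℂ)/68512955) * h3 + ((-907 : ℂ)/27817290) * h5 + ((-354577 : ℂ)/97360515) * h6 + ((-131 : ℂ)/84735) * h7 + ((401 : ℂ)/36676080) * h8 + ((1714007 : ℂ)/3288621840) * h9 + ((-4427 : ℂ)/207702432) * h11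
  have ea3 : a3 = 0 := by linear_combination ((711715573 : ℂ)/5192560800) * h1 + ((352797103 : ℂ)/24664663800) * h2 + ((-5409183 : ℂ)/2740518200) * h3 + ((-9 : ℂ)/160) * h4 + ((-45522607 : ℂ)/7788841200) * h5 + ((-32975527 : ℂ)/7788841200) * h6 + ((3 : ℂ)/1076) * h7 + ((889057 : ℂ)/978028800) * h8 + ((-95432467 : ℂ)/263089747200) * h9 + ((13 : ℂ)/720) * h10 + ((-265849051 : ℂ)/49848583680) * h11 + ((-1 : ℂ)/810) * h12
  have eb0 : b0 = 0 := by linear_combination ((-346061311 : ℂ)/741794400) * h1 + ((95819629 : ℂ)/3523523400) * h2 + ((10274843 : ℂ)/1174507800) * h3 + ((21 : ℂ)/160) * h4 + ((387487 : ℂ)/41210800) * h5 + ((8424589 : ℂ)/1112691600) * h6 + ((-5 : ℂ)/4842) * h7 + ((-621497 : ℂ)/419155200) * h8 + ((-333864293 : ℂ)/112752748800) * h9 + ((-17 : ℂ)/720) * h10 + ((36912737 : ℂ)/7121226240) * h11 + ((-1 : ℂ)/810) * h12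
  have eb1 : b1 = 0 := by linear_combination ((603059 : ℂ)/32453505) * h1 + ((-193558 : ℂ)/205538865) * h2 + ((-3671341 : ℂ)/411077730) * h3 + ((-2371 : ℂ)/13908645) * h5 + ((669611 : ℂ)/194721030) * h6 + ((131 : ℂ)/84735) * h7 + ((487 : ℂ)/12225360) * h8 + ((-4641143 : ℂ)/9865865520) * h9 + ((671009 : ℂ)/207702432) * h11
  have eb2 : b2 = 0 := by linear_combination ((579691 : ℂ)/37089720) * h1 + ((-46748 : ℂ)/9787565) * h2 + ((339 : ℂ)/19575130) * h3 + ((-61903 : ℂ)/389442060) * h5 + ((-11579 : ℂ)/55634580) * h6 + ((29 : ℂ)/84735) * h7 + ((3649 : ℂ)/146704320) * h8 + ((1218649 : ℂ)/1879212480) * h9 + ((-17189 : ℂ)/118687104) * h11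
  have eb3 : b3 = 0 := by linear_combination ((295666631 : ℂ)/741794400) * h1 + ((-56905159 : ℂ)/3523523400) * h2 + ((49899 : ℂ)/391502600) * h3 + ((-21 : ℂ)/160) * h4 + ((-9640229 : ℂ)/1112691600) * h5 + ((-11432669 : ℂ)/1112691600) * h6 + ((-3 : ℂ)/1076) * h7 + ((189179 : ℂ)/139718400) * h8 + ((98687551 : ℂ)/37584249600) * h9 + ((17 : ℂ)/720) * h10 + ((-56231897 : ℂ)/7121226240) * h11 + ((1 : ℂ)/810) * h12
  have ec0 : c0 = 0 := by linear_combination ((713669 : ℂ)/428960) * h1 + ((-9089 : ℂ)/107240) * h2 + ((-9089 : ℂ)/107240) * h3 + ((-31 : ℂ)/96) * h4 + ((-13471 : ℂ)/643440) * h5 + ((-13471 : ℂ)/643440) * h6 + ((28813 : ℂ)/3431680) * h8 + ((28813 : ℂ)/3431680) * h9 + ((1 : ℂ)/16) * h10 + ((-48203 : ℂ)/4118016) * h11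
  have ec1 : c1 = 0 := by linear_combination ((-275063 : ℂ)/1442378) * h1 + ((71193 : ℂ)/2884756) * h2 + ((122729 : ℂ)/1442378) * h3 + ((-6232 : ℂ)/309081) * h5 + ((-356345 : ℂ)/12981402) * h6 + ((-95 : ℂ)/7532) * h7 + ((-127 : ℂ)/64344) * h8 + ((65417 : ℂ)/17308536) * h9 + ((-2674535 : ℂ)/103851216) * h11
  have ec2 : c2 = 0 := by linear_combination ((-95019 : ℂ)/721189) * h1 + ((158533 : ℂ)/2884756) * h2 + ((-3933 : ℂ)/721189) * h3 + ((1615 : ℂ)/1854486) * h5 + ((17651 : ℂ)/2163567) * h6 + ((95 : ℂ)/7532) * h7 + ((-19 : ℂ)/128688) * h8 + ((-204271 : ℂ)/34617072) * h9 + ((161405 : ℂ)/207702432) * h11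
  have ec3 : c3 = 0 := by linear_combination ((-441209 : ℂ)/428960) * h1 + ((369 : ℂ)/107240) * h2 + ((369 : ℂ)/107240) * h3 + ((31 : ℂ)/96) * h4 + ((52193 : ℂ)/1930320) * h5 + ((52193 : ℂ)/1930320) * h6 + ((-14473 : ℂ)/3431680) * h8 + ((-14473 : ℂ)/3431680) * h9 + ((-1 : ℂ)/16) * h10 + ((304589 : ℂ)/12354048) * h11
  refine ⟨?_, ?_, ?_⟩
  · rw [ra, ea0, ea1, ea2, ea3]; simp
  · rw [rb, eb0, eb1, eb2, eb3]; simp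
  · rw [rc, ec0, ec1, ec2, ec3]; simp
end

section
/- Let S = ℂ[x,y,z] and Q = (x³ + y³ + z³)·(x³ + y³). The S-module of Jacobian syzygies of Q, i.e., the kernel of the S-linear map S³ → S sending (a,b,c) to a·(∂Q/∂x) + b·(∂Q/∂y) + c·(∂Q/∂z), is generated by two elements, which can be chosen with all components homogeneous, one syzygy of degree 2 and one syzygy of degree 3. -/
/-!
Write `f = x³ + y³ + z³` and `g = x³ + y³`, so `Q = f g` and `∇Q = 3 (x² (f + g), y² (f + g), z² g)`.
A syzygy `(a, b, c)` thus satisfies `(f + g) (x² a + y² b) + (z² g) c = 0`. Since `z ∤ g`, the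
polynomials `f + g = 2g + z³` and `z² g` are relatively prime, so `c = -(f + g) t` and
`x² a + y² b = z² g t = x z² t · x² + y z² t · y²`. As `x²` and `y²` are relatively prime, the
remaining syzygy of `(x², y²)` is a multiple `s (y², -x²)` of the Koszul one. Hence every syzygy
is `s r₁ + t r₂` with `r₁ = (y², -x², 0)` and `r₂ = (x z², y z², -(f + g))`.
-/

open MvPolynomial

theorem IsRelPrime.exists_eq_mul_of_mul_add_mul_eq_zero {R : Type*} [CommRing R] [IsDomain R]
    [DecompositionMonoid R] {u w a b : R} (h : IsRelPrime u w) (hu : u ≠ 0)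
    (hab : u * a + w * b = 0) : ∃ t, a = w * t ∧ b = -(u * t) := by
  obtain ⟨s, rfl⟩ : u ∣ b := h.dvd_of_dvd_mul_left ⟨-a, by linear_combination hab⟩
  refine ⟨-s, ?_, by ring⟩
  have : u * (a + w * s) = 0 := by linear_combination hab
  linear_combination (mul_eq_zero.mp this).resolve_left hu

namespace MvPolynomial

variable {σ R : Type*} [CommRing R] [IsDomain R]

theorem isRelPrime_X_X {i j : σ} (hij : i ≠ j) : IsRelPrime (X i : MvPolynomial σ R) (X j) :=
  X_prime.irreducible.isRelPrime_iff_not_dvd.mpr (X_dvd_X.not.mpr hij)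

theorem isRelPrime_X_two_X_zero_pow_three_add_X_one_pow_three :
    IsRelPrime (X 2 : MvPolynomial (Fin 3) R) (X 0 ^ 3 + X 1 ^ 3) := by
  refine X_prime.irreducible.isRelPrime_iff_not_dvd.mpr fun ⟨c, hc⟩ ↦ ?_
  simpa using congrArg (eval ![1, 0, 0]) hc

end MvPolynomial

theorem sum_mul_pderiv_EL6_eq {R : Type*} [CommSemiring R] (v : Fin 3 → MvPolynomial (Fin 3) R) :
    v 0 * pderiv 0 ((X 0 ^ 3 + X 1 ^ 3 + X 2 ^ 3) * (X 0 ^ 3 + X 1 ^ 3))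
      + v 1 * pderiv 1 ((X 0 ^ 3 + X 1 ^ 3 + X 2 ^ 3) * (X 0 ^ 3 + X 1 ^ 3))
      + v 2 * pderiv 2 ((X 0 ^ 3 + X 1 ^ 3 + X 2 ^ 3) * (X 0 ^ 3 + X 1 ^ 3))
      = 3 * ((X 0 ^ 3 + X 1 ^ 3 + X 2 ^ 3 + (X 0 ^ 3 + X 1 ^ 3)) * (X 0 ^ 2 * v 0 + X 1 ^ 2 * v 1)
        + X 2 ^ 2 * (X 0 ^ 3 + X 1 ^ 3) * v 2) := by
  simp only [Derivation.leibniz, Derivation.leibniz_pow, map_add, pderiv_X, Pi.single_eq_same,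
    Pi.single_eq_of_ne, ne_eq, Fin.reduceEq, not_false_eq_true, smul_eq_mul, nsmul_eq_mul]
  ring

theorem isRelPrime_EL6 {K : Type*} [Field K] (h2 : (2 : K) ≠ 0) :
    IsRelPrime (X 0 ^ 3 + X 1 ^ 3 + X 2 ^ 3 + (X 0 ^ 3 + X 1 ^ 3) : MvPolynomial (Fin 3) K)
      (X 2 ^ 2 * (X 0 ^ 3 + X 1 ^ 3)) := by
  have hzg := isRelPrime_X_two_X_zero_pow_three_add_X_one_pow_three (R := K)
  have hu2 : IsUnit (2 : MvPolynomial (Fin 3) K) := by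
    simpa only [map_ofNat] using h2.isUnit.map (C : K →+* MvPolynomial (Fin 3) K)
  refine .mul_right (IsRelPrime.pow_right ?_) ?_
  · rw [show (X 0 ^ 3 + X 1 ^ 3 + X 2 ^ 3 + (X 0 ^ 3 + X 1 ^ 3) : MvPolynomial (Fin 3) K)
      = 2 * (X 0 ^ 3 + X 1 ^ 3) + X 2 * X 2 ^ 2 by ring]
    exact ((isRelPrime_mul_unit_left_left hu2).mpr hzg.symm).add_mul_left_left _
  · rw [show (X 0 ^ 3 + X 1 ^ 3 + X 2 ^ 3 + (X 0 ^ 3 + X 1 ^ 3) : MvPolynomial (Fin 3) K)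
      = X 2 ^ 3 + (X 0 ^ 3 + X 1 ^ 3) * 2 by ring]
    exact hzg.pow_left.add_mul_left_left _

theorem syzygy_EL6_iff {K : Type*} [Field K] (h2 : (2 : K) ≠ 0) {a b c : MvPolynomial (Fin 3) K} :
    (X 0 ^ 3 + X 1 ^ 3 + X 2 ^ 3 + (X 0 ^ 3 + X 1 ^ 3)) * (X 0 ^ 2 * a + X 1 ^ 2 * b)
        + X 2 ^ 2 * (X 0 ^ 3 + X 1 ^ 3) * c = 0 ↔
      ∃ s t, a = s * X 1 ^ 2 + t * (X 0 * X 2 ^ 2) ∧ b = s * -X 0 ^ 2 + t * (X 1 * X 2 ^ 2) ∧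
        c = s * 0 + t * -(X 0 ^ 3 + X 1 ^ 3 + X 2 ^ 3 + (X 0 ^ 3 + X 1 ^ 3)) := by
  constructor
  · intro hsyz
    have hfg : (X 0 ^ 3 + X 1 ^ 3 + X 2 ^ 3 + (X 0 ^ 3 + X 1 ^ 3) : MvPolynomial (Fin 3) K) ≠ 0 :=
      fun h ↦ by simpa using congrArg (eval ![0, 0, 1]) h
    obtain ⟨t, hA, hc⟩ := (isRelPrime_EL6 h2).exists_eq_mul_of_mul_add_mul_eq_zero hfg hsyz
    have hxy : IsRelPrime (X 0 ^ 2 : MvPolynomial (Fin 3) K) (X 1 ^ 2) :=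
      (isRelPrime_X_X (by decide)).pow
    obtain ⟨s, ha, hb⟩ := hxy.exists_eq_mul_of_mul_add_mul_eq_zero (pow_ne_zero 2 (X_ne_zero 0))
      (a := a - X 0 * X 2 ^ 2 * t) (b := b - X 1 * X 2 ^ 2 * t) (by linear_combination hA)
    exact ⟨s, t, by linear_combination ha, by linear_combination hb, by linear_combination hc⟩
  · rintro ⟨s, t, rfl, rfl, rfl⟩
    ring

/-- The Jacobian syzygy module of the defining polynomial of `EL₆` is generated by
two syzygies, with homogeneous components, of degrees 2 and 3. -/
theorem syzygy_module_EL6_free :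
    ∃ r₁ r₂ : Fin 3 → MvPolynomial (Fin 3) ℂ,
      (∀ i, (r₁ i).IsHomogeneous 2) ∧ (∀ i, (r₂ i).IsHomogeneous 3) ∧
      ∀ v : Fin 3 → MvPolynomial (Fin 3) ℂ,
        (v 0 * pderiv 0 (((X 0) ^ 3 + (X 1) ^ 3 + (X 2) ^ 3) * ((X 0) ^ 3 + (X 1) ^ 3))
          + v 1 * pderiv 1 (((X 0) ^ 3 + (X 1) ^ 3 + (X 2) ^ 3) * ((X 0) ^ 3 + (X 1) ^ 3))
          + v 2 * pderiv 2 (((X 0) ^ 3 + (X 1) ^ 3 + (X 2) ^ 3) * ((X 0) ^ 3 + (X 1) ^ 3))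
            = 0) ↔
        v ∈ Submodule.span (MvPolynomial (Fin 3) ℂ) {r₁, r₂} := by
  have hx := isHomogeneous_X ℂ (0 : Fin 3)
  have hy := isHomogeneous_X ℂ (1 : Fin 3)
  have hz := isHomogeneous_X ℂ (2 : Fin 3)
  refine ⟨![X 1 ^ 2, -X 0 ^ 2, 0],
    ![X 0 * X 2 ^ 2, X 1 * X 2 ^ 2, -(X 0 ^ 3 + X 1 ^ 3 + X 2 ^ 3 + (X 0 ^ 3 + X 1 ^ 3))],
    fun i ↦ ?_, fun i ↦ ?_, fun v ↦ ?_⟩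
  · fin_cases i
    exacts [hy.pow 2, (hx.pow 2).neg, isHomogeneous_zero _ _ _]
  · fin_cases i
    exacts [hx.mul (hz.pow 2), hy.mul (hz.pow 2),
      ((((hx.pow 3).add (hy.pow 3)).add (hz.pow 3)).add ((hx.pow 3).add (hy.pow 3))).neg]
  rw [sum_mul_pderiv_EL6_eq, mul_eq_zero, or_iff_right (by norm_num), syzygy_EL6_iff two_ne_zero,
    Submodule.mem_span_pair]
  refine exists₂_congr fun s t ↦ ?_
  rw [funext_iff, Fin.forall_fin_succ, Fin.forall_fin_succ, Fin.forall_fin_one]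
  simp [eq_comm]
end

section
/- Let S = ℂ[x,y,z] and Q = (x³ + y³ + z³)·(x³ + y³)·(y + z). The S-module of Jacobian syzygies of Q, i.e., the kernel of the S-linear map S³ → S sending (a,b,c) to a·(∂Q/∂x) + b·(∂Q/∂y) + c·(∂Q/∂z), is generated by two elements, which can be chosen with all components homogeneous of degree 3. -/
/-!
The cubic syzygies `r₁, r₂` below satisfy `r₁ × r₂ = -7 ∇Q` (Saito's criterion). For any syzygy
`v`, the vector triple product gives `(v × r₂) × ∇Q = 0 = (r₁ × v) × ∇Q`; as `∂Q/∂x` and `∂Q/∂z`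
are coprime, this forces `v × r₂ = a ∇Q` and `r₁ × v = b ∇Q` for polynomials `a, b`. Cramer's rule
for `r₁, r₂` and the first basis vector then reads `-7 (∂Q/∂x) v = (∂Q/∂x) (a r₁ + b r₂)`.
-/

open MvPolynomial Matrix

section CrossProduct

variable {R : Type*} [CommRing R]

theorem cross_cross_eq_zero_of_dotProduct_eq_zero {u v g : Fin 3 → R}
    (hu : u ⬝ᵥ g = 0) (hv : v ⬝ᵥ g = 0) : u ⨯₃ v ⨯₃ g = 0 := by
  rw [cross_cross_eq_smul_sub_smul, hu, hv, zero_smul, zero_smul, sub_zero]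

theorem triple_product_smul_eq (u v w t : Fin 3 → R) :
    (u ⬝ᵥ v ⨯₃ w) • t = (t ⬝ᵥ v ⨯₃ w) • u + (u ⬝ᵥ t ⨯₃ w) • v + (u ⬝ᵥ v ⨯₃ t) • w := by
  ext i
  fin_cases i <;>
  · simp only [cross_apply, vec3_dotProduct, Pi.add_apply, Pi.smul_apply, smul_eq_mul,
      Fin.zero_eta, Fin.mk_one, Fin.reduceFinMk, cons_val]
    ring

variable [IsDomain R] [DecompositionMonoid R]

theorem exists_eq_smul_of_cross_eq_zero {w g : Fin 3 → R} (hg : IsRelPrime (g 0) (g 2))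
    (hg0 : g 0 ≠ 0) (hw : w ⨯₃ g = 0) : ∃ h : R, w = h • g := by
  have hw₁ : w 2 * g 0 - w 0 * g 2 = 0 := by simpa [cross_apply] using congrFun hw 1
  have hw₂ : w 0 * g 1 - w 1 * g 0 = 0 := by simpa [cross_apply] using congrFun hw 2
  obtain ⟨h, hh⟩ : g 0 ∣ w 0 :=
    hg.dvd_of_dvd_mul_right ⟨w 2, by linear_combination -hw₁⟩
  refine ⟨h, funext fun i => ?_⟩
  fin_cases i
  · simp [hh, mul_comm]
  · refine mul_right_cancel₀ hg0 ?_
    simp only [Fin.mk_one, Pi.smul_apply, smul_eq_mul]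
    linear_combination -hw₂ + g 1 * hh
  · refine mul_right_cancel₀ hg0 ?_
    simp only [Fin.reduceFinMk, Pi.smul_apply, smul_eq_mul]
    linear_combination hw₁ + g 2 * hh

theorem dotProduct_eq_zero_iff_mem_span_pair {g r₁ r₂ : Fin 3 → R} {c : R}
    (hg : IsRelPrime (g 0) (g 2)) (hg0 : g 0 ≠ 0) (hc : IsUnit c) (hr : r₁ ⨯₃ r₂ = c • g)
    (v : Fin 3 → R) : v ⬝ᵥ g = 0 ↔ v ∈ Submodule.span R {r₁, r₂} := by
  have hr₁ : r₁ ⬝ᵥ g = 0 := by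
    simpa [hr, hc.mul_right_eq_zero] using dot_self_cross r₁ r₂
  have hr₂ : r₂ ⬝ᵥ g = 0 := by
    simpa [hr, hc.mul_right_eq_zero] using dot_cross_self r₁ r₂
  refine ⟨fun hv => ?_, fun hv => ?_⟩
  · obtain ⟨a, ha⟩ := exists_eq_smul_of_cross_eq_zero hg hg0
      (cross_cross_eq_zero_of_dotProduct_eq_zero hv hr₂)
    obtain ⟨b, hb⟩ := exists_eq_smul_of_cross_eq_zero hg hg0
      (cross_cross_eq_zero_of_dotProduct_eq_zero hr₁ hv)
    have hcramer := triple_product_smul_eq (Pi.single 0 1) r₁ r₂ v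
    simp only [hr, ha, hb, dotProduct_smul, hv, single_one_dotProduct, smul_eq_mul, mul_zero,
      zero_smul, zero_add] at hcramer
    have hcv : c • v = a • r₁ + b • r₂ := by
      refine smul_right_injective _ hg0 ?_
      simp only [smul_add, smul_smul]
      rw [mul_comm, hcramer, mul_comm a, mul_comm b]
    rw [← Submodule.smul_mem_iff_of_isUnit _ hc, hcv]
    exact Submodule.add_mem _ (Submodule.smul_mem _ _ (Submodule.subset_span (by simp)))
      (Submodule.smul_mem _ _ (Submodule.subset_span (by simp)))
  · obtain ⟨a, b, rfl⟩ := Submodule.mem_span_pair.1 hv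
    simp [add_dotProduct, smul_dotProduct, hr₁, hr₂]

end CrossProduct

namespace MvPolynomial

section Homogeneous

variable {σ R : Type*} [CommSemiring R] {p : MvPolynomial σ R} {n : ℕ}

theorem IsHomogeneous.mul_X (hp : p.IsHomogeneous n) (i : σ) :
    (p * X i).IsHomogeneous (n + 1) :=
  hp.mul (isHomogeneous_X R i)

theorem IsHomogeneous.mul_X_pow (hp : p.IsHomogeneous n) (i : σ) (k : ℕ) :
    (p * X i ^ k).IsHomogeneous (n + k) :=
  hp.mul (isHomogeneous_X_pow i k)

theorem isHomogeneous_ofNat (k : ℕ) [k.AtLeastTwo] :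
    (OfNat.ofNat k : MvPolynomial σ R).IsHomogeneous 0 := by
  rw [← map_ofNat C]
  exact isHomogeneous_C _ _

end Homogeneous

section Field

variable {σ K : Type*} [Field K]

theorem isUnit_ofNat [CharZero K] (k : ℕ) [k.AtLeastTwo] :
    IsUnit (OfNat.ofNat k : MvPolynomial σ K) := by
  rw [← map_ofNat C]
  exact (isUnit_iff_ne_zero.2 (OfNat.ofNat_ne_zero k)).map C

theorem prime_of_isHomogeneous_one {p : MvPolynomial σ K} (hp : p.IsHomogeneous 1)
    (h0 : p ≠ 0) : Prime p := by
  refine (irreducible_of_totalDegree_eq_one (hp.totalDegree h0) fun x hx => ?_).prime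
  refine isUnit_iff_ne_zero.2 fun hx0 => h0 (MvPolynomial.ext _ _ fun d => ?_)
  simpa [hx0] using hx d

theorem isRelPrime_of_eval_eq_zero {p q : MvPolynomial σ K} (hp : Prime p) (x : σ → K)
    (hpx : eval x p = 0) (hqx : eval x q ≠ 0) : IsRelPrime p q :=
  hp.irreducible.isRelPrime_iff_not_dvd.2 fun ⟨r, hr⟩ => hqx (by simp [hr, hpx])

end Field

end MvPolynomial

namespace EL7

local notation "S" => MvPolynomial (Fin 3) ℂ

noncomputable def el7 : S := (X 0 ^ 3 + X 1 ^ 3 + X 2 ^ 3) * (X 0 ^ 3 + X 1 ^ 3) * (X 1 + X 2)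

theorem pderiv_zero_el7 :
    pderiv 0 el7 = 3 * X 0 ^ 2 * (X 1 + X 2) * (2 * X 0 ^ 3 + 2 * X 1 ^ 3 + X 2 ^ 3) := by
  simp only [el7, Derivation.leibniz, Derivation.leibniz_pow, map_add, pderiv_X, Pi.single_apply,
    Fin.reduceEq, ↓reduceIte, smul_eq_mul, nsmul_eq_mul]
  ring

theorem pderiv_one_el7 :
    pderiv 1 el7 = 3 * X 1 ^ 2 * (X 1 + X 2) * (2 * X 0 ^ 3 + 2 * X 1 ^ 3 + X 2 ^ 3) +
      (X 0 ^ 3 + X 1 ^ 3 + X 2 ^ 3) * (X 0 ^ 3 + X 1 ^ 3) := by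
  simp only [el7, Derivation.leibniz, Derivation.leibniz_pow, map_add, pderiv_X, Pi.single_apply,
    Fin.reduceEq, ↓reduceIte, smul_eq_mul, nsmul_eq_mul]
  ring

theorem pderiv_two_el7 :
    pderiv 2 el7 = (X 0 ^ 3 + X 1 ^ 3) * (X 0 ^ 3 + X 1 ^ 3 + 3 * X 1 * X 2 ^ 2 + 4 * X 2 ^ 3) := by
  simp only [el7, Derivation.leibniz, Derivation.leibniz_pow, map_add, pderiv_X, Pi.single_apply,
    Fin.reduceEq, ↓reduceIte, smul_eq_mul, nsmul_eq_mul]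
  ring

theorem pderiv_zero_el7_ne_zero : pderiv 0 el7 ≠ 0 := by
  rw [pderiv_zero_el7]
  intro h
  simpa using congrArg (eval ![1, 1, 0]) h

theorem isRelPrime_pderiv_el7 : IsRelPrime (pderiv 0 el7) (pderiv 2 el7) := by
  have hx : Prime (X 0 : S) := prime_of_isHomogeneous_one (isHomogeneous_X ℂ 0) (X_ne_zero 0)
  have hz : Prime (X 2 : S) := prime_of_isHomogeneous_one (isHomogeneous_X ℂ 2) (X_ne_zero 2)
  have hyz : Prime (X 1 + X 2 : S) :=
    prime_of_isHomogeneous_one ((isHomogeneous_X ℂ 1).add (isHomogeneous_X ℂ 2))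
      fun h => by simpa using congrArg (eval ![0, 1, 0]) h
  have hℓ : Prime (6 * X 1 + 7 * X 2 : S) := by
    refine prime_of_isHomogeneous_one ?_ fun h => by simpa using congrArg (eval ![0, 1, 0]) h
    simpa only [← map_ofNat C] using (isHomogeneous_C_mul_X 6 1).add (isHomogeneous_C_mul_X 7 2)
  have hB : IsRelPrime (2 * X 0 ^ 3 + 2 * X 1 ^ 3 + X 2 ^ 3 : S) (X 0 ^ 3 + X 1 ^ 3) := by
    refine .of_add_mul_left_left (z := -2) ?_
    rw [show (2 * X 0 ^ 3 + 2 * X 1 ^ 3 + X 2 ^ 3 : S) + (X 0 ^ 3 + X 1 ^ 3) * -2 = X 2 ^ 3 by ring]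
    exact (isRelPrime_of_eval_eq_zero hz ![1, 0, 0] (by simp) (by simp)).pow_left
  have hK : IsRelPrime (2 * X 0 ^ 3 + 2 * X 1 ^ 3 + X 2 ^ 3 : S)
      (X 0 ^ 3 + X 1 ^ 3 + 3 * X 1 * X 2 ^ 2 + 4 * X 2 ^ 3) := by
    refine .of_mul_right_right (y := 2) (.of_add_mul_left_right (z := -1) ?_)
    rw [show (2 * (X 0 ^ 3 + X 1 ^ 3 + 3 * X 1 * X 2 ^ 2 + 4 * X 2 ^ 3) : S) +
      (2 * X 0 ^ 3 + 2 * X 1 ^ 3 + X 2 ^ 3) * -1 = X 2 ^ 2 * (6 * X 1 + 7 * X 2) by ring]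
    exact .mul_right (isRelPrime_of_eval_eq_zero hz ![1, 0, 0] (by simp) (by simp)).symm.pow_right
      (isRelPrime_of_eval_eq_zero hℓ ![0, 7, -6] (by simp; norm_num) (by simp; norm_num)).symm
  rw [pderiv_zero_el7, pderiv_two_el7]
  refine .mul_left (.mul_left (.mul_left (isUnit_ofNat 3).isRelPrime_left ?_) ?_) (hB.mul_right hK)
  · exact (isRelPrime_of_eval_eq_zero hx ![0, 1, 0] (by simp) (by simp)).pow_left
  · exact isRelPrime_of_eval_eq_zero hyz ![1, 1, -1] (by simp) (by simp; norm_num)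

-- A basis of the cubic syzygies, obtained by solving the linear system for their coefficients.
noncomputable def syz₁ : Fin 3 → S :=
  ![X 0 ^ 3 + 7 * X 1 ^ 3 + 7 * X 1 ^ 2 * X 2, -(6 * X 0 ^ 2 * X 1) - 7 * X 0 ^ 2 * X 2,
    X 0 ^ 2 * X 2]

noncomputable def syz₂ : Fin 3 → S :=
  ![6 * X 0 * X 1 ^ 2 + X 0 * X 1 * X 2 - 4 * X 0 * X 2 ^ 2,
    -(7 * X 0 ^ 3) - X 1 ^ 3 + X 1 ^ 2 * X 2 - 4 * X 1 * X 2 ^ 2,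
    7 * X 0 ^ 3 + 7 * X 1 ^ 3 - X 1 ^ 2 * X 2 + X 1 * X 2 ^ 2 + 3 * X 2 ^ 3]

theorem isHomogeneous_syz (i : Fin 3) : (syz₁ i).IsHomogeneous 3 ∧ (syz₂ i).IsHomogeneous 3 := by
  fin_cases i <;> refine ⟨?_, ?_⟩ <;>
  · simp only [syz₁, syz₂, Fin.zero_eta, Fin.mk_one, Fin.reduceFinMk, Matrix.cons_val]
    repeat' first
      | with_reducible_and_instances apply IsHomogeneous.add
      | with_reducible_and_instances apply IsHomogeneous.sub
      | with_reducible_and_instances apply IsHomogeneous.neg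
      | with_reducible_and_instances apply IsHomogeneous.mul_X_pow
      | with_reducible_and_instances apply IsHomogeneous.mul_X
      | with_reducible_and_instances exact isHomogeneous_ofNat _
      | with_reducible_and_instances exact isHomogeneous_X _ _
      | with_reducible_and_instances exact isHomogeneous_X_pow _ _

theorem syz₁_cross_syz₂ : syz₁ ⨯₃ syz₂ = (-7 : S) • fun i => pderiv i el7 := by
  funext i
  fin_cases i <;>
  · simp only [syz₁, syz₂, cross_apply, Pi.smul_apply, pderiv_zero_el7, pderiv_one_el7,
      pderiv_two_el7, Fin.zero_eta, Fin.mk_one, Fin.reduceFinMk, cons_val, smul_eq_mul]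
    ring

end EL7

open EL7 in
/-- The Jacobian syzygy module of the defining polynomial of `EL₇` is generated by
two syzygies with homogeneous components of degree 3. -/
theorem syzygy_module_EL7_free :
    ∃ r₁ r₂ : Fin 3 → MvPolynomial (Fin 3) ℂ,
      (∀ i, (r₁ i).IsHomogeneous 3) ∧ (∀ i, (r₂ i).IsHomogeneous 3) ∧
      ∀ v : Fin 3 → MvPolynomial (Fin 3) ℂ,
        (v 0 * pderiv 0 ((((X 0) ^ 3 + (X 1) ^ 3 + (X 2) ^ 3) * ((X 0) ^ 3 + (X 1) ^ 3))
            * ((X 1) + (X 2)))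
          + v 1 * pderiv 1 ((((X 0) ^ 3 + (X 1) ^ 3 + (X 2) ^ 3) * ((X 0) ^ 3 + (X 1) ^ 3))
            * ((X 1) + (X 2)))
          + v 2 * pderiv 2 ((((X 0) ^ 3 + (X 1) ^ 3 + (X 2) ^ 3) * ((X 0) ^ 3 + (X 1) ^ 3))
            * ((X 1) + (X 2))) = 0) ↔
        v ∈ Submodule.span (MvPolynomial (Fin 3) ℂ) {r₁, r₂} := by
  refine ⟨syz₁, syz₂, fun i => (isHomogeneous_syz i).1, fun i => (isHomogeneous_syz i).2,
    fun v => ?_⟩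
  rw [← dotProduct_eq_zero_iff_mem_span_pair isRelPrime_pderiv_el7 pderiv_zero_el7_ne_zero
    (isUnit_ofNat 7).neg syz₁_cross_syz₂ v, vec3_dotProduct]
  rfl
end

section
/- Let Q = (x³ + y³ + z³)·(x³ + y³)·(y + z) in ℂ[x,y,z]. If a, b, c ∈ ℂ[x,y,z] are polynomials of degree at most 2 satisfying a·(∂Q/∂x) + b·(∂Q/∂y) + c·(∂Q/∂z) = 0, then a = b = c = 0. -/
open MvPolynomial Finsupp

noncomputable def mexp (i j k : ℕ) : Fin 3 →₀ ℕ := single 0 i + single 1 j + single 2 k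

lemma mexp_apply0 (i j k : ℕ) : mexp i j k 0 = i := by simp [mexp]
lemma mexp_apply1 (i j k : ℕ) : mexp i j k 1 = j := by simp [mexp]
lemma mexp_apply2 (i j k : ℕ) : mexp i j k 2 = k := by simp [mexp]

lemma mexp_le {i j k I J K : ℕ} : mexp i j k ≤ mexp I J K ↔ i ≤ I ∧ j ≤ J ∧ k ≤ K := by
  rw [Finsupp.le_def]
  constructor
  · intro h
    exact ⟨by simpa [mexp_apply0] using h 0, by simpa [mexp_apply1] using h 1,
      by simpa [mexp_apply2] using h 2⟩
  · rintro ⟨h1, h2, h3⟩ i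
    fin_cases i <;> simpa [mexp_apply0, mexp_apply1, mexp_apply2]

lemma mexp_sub (i j k I J K : ℕ) : mexp I J K - mexp i j k = mexp (I-i) (J-j) (K-k) := by
  ext t
  fin_cases t <;> simp [Finsupp.sub_apply, mexp_apply0, mexp_apply1, mexp_apply2]

lemma monomial_mexp (i j k : ℕ) (c : ℂ) :
    (monomial (mexp i j k) c : MvPolynomial (Fin 3) ℂ) = C c * X 0 ^ i * X 1 ^ j * X 2 ^ k := by
  rw [mexp]; simp [X_pow_eq_monomial, monomial_mul, C_mul_monomial]

lemma eq_mexp (m : Fin 3 →₀ ℕ) : m = mexp (m 0) (m 1) (m 2) := by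
  ext t
  fin_cases t <;> simp [mexp_apply0, mexp_apply1, mexp_apply2]

lemma support_sum (m : Fin 3 →₀ ℕ) : ∑ i ∈ m.support, m i = m 0 + m 1 + m 2 := by
  rw [Finset.sum_subset (Finset.subset_univ m.support)]
  · simp [Fin.sum_univ_three]
  · intro x _ hx
    simpa using hx

set_option maxHeartbeats 8000000 in
/-- The defining polynomial of `EL₇` has no nonzero Jacobian syzygy of degree ≤ 2. -/
theorem no_low_degree_syzygy_EL7
    (Q : MvPolynomial (Fin 3) ℂ)
    (hQ : Q = ((X 0) ^ 3 + (X 1) ^ 3 + (X 2) ^ 3) * ((X 0) ^ 3 + (X 1) ^ 3)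
      * ((X 1) + (X 2)))
    (a b c : MvPolynomial (Fin 3) ℂ)
    (ha : a.totalDegree ≤ 2) (hb : b.totalDegree ≤ 2) (hc : c.totalDegree ≤ 2)
    (hsyz : a * pderiv 0 Q + b * pderiv 1 Q + c * pderiv 2 Q = 0) :
    a = 0 ∧ b = 0 ∧ c = 0 := by
  have hd0 : pderiv 0 Q = monomial (mexp 2 0 4) 3 + monomial (mexp 2 1 3) 3 + monomial (mexp 2 3 1) 6 + monomial (mexp 2 4 0) 6 + monomial (mexp 5 0 1) 6 + monomial (mexp 5 1 0) 6 := by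
    subst hQ
    simp only [monomial_mexp]
    simp only [map_add, map_mul, pderiv_X_self, pderiv_X_of_ne (by decide : (1:Fin 3) ≠ 0), pderiv_X_of_ne (by decide : (2:Fin 3) ≠ 0), pderiv_X_of_ne (by decide : (0:Fin 3) ≠ 1), pderiv_X_of_ne (by decide : (2:Fin 3) ≠ 1), pderiv_X_of_ne (by decide : (0:Fin 3) ≠ 2), pderiv_X_of_ne (by decide : (1:Fin 3) ≠ 2), pderiv_pow, Derivation.leibniz, smul_eq_mul, map_ofNat, C_1, mul_one]
    push_cast
    ring
  have hd1 : pderiv 1 Q = monomial (mexp 0 2 4) 3 + monomial (mexp 0 3 3) 4 + monomial (mexp 0 5 1) 6 + monomial (mexp 0 6 0) 7 + monomial (mexp 3 0 3) 1 + monomial (mexp 3 2 1) 6 + monomial (mexp 3 3 0) 8 + monomial (mexp 6 0 0) 1 := by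
    subst hQ
    simp only [monomial_mexp]
    simp only [map_add, map_mul, pderiv_X_self, pderiv_X_of_ne (by decide : (1:Fin 3) ≠ 0), pderiv_X_of_ne (by decide : (2:Fin 3) ≠ 0), pderiv_X_of_ne (by decide : (0:Fin 3) ≠ 1), pderiv_X_of_ne (by decide : (2:Fin 3) ≠ 1), pderiv_X_of_ne (by decide : (0:Fin 3) ≠ 2), pderiv_X_of_ne (by decide : (1:Fin 3) ≠ 2), pderiv_pow, Derivation.leibniz, smul_eq_mul, map_ofNat, C_1, mul_one]
    push_cast
    ring
  have hd2 : pderiv 2 Q = monomial (mexp 0 3 3) 4 + monomial (mexp 0 4 2) 3 + monomial (mexp 0 6 0) 1 + monomial (mexp 3 0 3) 4 + monomial (mexp 3 1 2) 3 + monomial (mexp 3 3 0) 2 + monomial (mexp 6 0 0) 1 := by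
    subst hQ
    simp only [monomial_mexp]
    simp only [map_add, map_mul, pderiv_X_self, pderiv_X_of_ne (by decide : (1:Fin 3) ≠ 0), pderiv_X_of_ne (by decide : (2:Fin 3) ≠ 0), pderiv_X_of_ne (by decide : (0:Fin 3) ≠ 1), pderiv_X_of_ne (by decide : (2:Fin 3) ≠ 1), pderiv_X_of_ne (by decide : (0:Fin 3) ≠ 2), pderiv_X_of_ne (by decide : (1:Fin 3) ≠ 2), pderiv_pow, Derivation.leibniz, smul_eq_mul, map_ofNat, C_1, mul_one]
    push_cast
    ring
  rw [hd0, hd1, hd2] at hsyz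
  have E0_2 := congrArg (coeff (mexp 0 2 4)) hsyz
  simp only [mul_add, coeff_add, coeff_mul_monomial', mexp_le, mexp_sub, MvPolynomial.coeff_zero, Nat.reduceLeDiff, Nat.reduceSub, and_true, true_and, and_false, false_and, and_self, if_true, if_false, reduceIte, mul_zero, zero_mul, add_zero, zero_add] at E0_2
  have E0_3 := congrArg (coeff (mexp 0 3 3)) hsyz
  simp only [mul_add, coeff_add, coeff_mul_monomial', mexp_le, mexp_sub, MvPolynomial.coeff_zero, Nat.reduceLeDiff, Nat.reduceSub, and_true, true_and, and_false, false_and, and_self, if_true, if_false, reduceIte, mul_zero, zero_mul, add_zero, zero_add] at E0_3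
  have E0_13 := congrArg (coeff (mexp 2 0 4)) hsyz
  simp only [mul_add, coeff_add, coeff_mul_monomial', mexp_le, mexp_sub, MvPolynomial.coeff_zero, Nat.reduceLeDiff, Nat.reduceSub, and_true, true_and, and_false, false_and, and_self, if_true, if_false, reduceIte, mul_zero, zero_mul, add_zero, zero_add] at E0_13
  have E1_3 := congrArg (coeff (mexp 0 3 4)) hsyz
  simp only [mul_add, coeff_add, coeff_mul_monomial', mexp_le, mexp_sub, MvPolynomial.coeff_zero, Nat.reduceLeDiff, Nat.reduceSub, and_true, true_and, and_false, false_and, and_self, if_true, if_false, reduceIte, mul_zero, zero_mul, add_zero, zero_add] at E1_3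
  have E1_4 := congrArg (coeff (mexp 0 4 3)) hsyz
  simp only [mul_add, coeff_add, coeff_mul_monomial', mexp_le, mexp_sub, MvPolynomial.coeff_zero, Nat.reduceLeDiff, Nat.reduceSub, and_true, true_and, and_false, false_and, and_self, if_true, if_false, reduceIte, mul_zero, zero_mul, add_zero, zero_add] at E1_4
  have E1_5 := congrArg (coeff (mexp 0 5 2)) hsyz
  simp only [mul_add, coeff_add, coeff_mul_monomial', mexp_le, mexp_sub, MvPolynomial.coeff_zero, Nat.reduceLeDiff, Nat.reduceSub, and_true, true_and, and_false, false_and, and_self, if_true, if_false, reduceIte, mul_zero, zero_mul, add_zero, zero_add] at E1_5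
  have E1_7 := congrArg (coeff (mexp 0 7 0)) hsyz
  simp only [mul_add, coeff_add, coeff_mul_monomial', mexp_le, mexp_sub, MvPolynomial.coeff_zero, Nat.reduceLeDiff, Nat.reduceSub, and_true, true_and, and_false, false_and, and_self, if_true, if_false, reduceIte, mul_zero, zero_mul, add_zero, zero_add] at E1_7
  have E1_10 := congrArg (coeff (mexp 1 2 4)) hsyz
  simp only [mul_add, coeff_add, coeff_mul_monomial', mexp_le, mexp_sub, MvPolynomial.coeff_zero, Nat.reduceLeDiff, Nat.reduceSub, and_true, true_and, and_false, false_and, and_self, if_true, if_false, reduceIte, mul_zero, zero_mul, add_zero, zero_add] at E1_10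
  have E1_11 := congrArg (coeff (mexp 1 3 3)) hsyz
  simp only [mul_add, coeff_add, coeff_mul_monomial', mexp_le, mexp_sub, MvPolynomial.coeff_zero, Nat.reduceLeDiff, Nat.reduceSub, and_true, true_and, and_false, false_and, and_self, if_true, if_false, reduceIte, mul_zero, zero_mul, add_zero, zero_add] at E1_11
  have E1_15 := congrArg (coeff (mexp 2 0 5)) hsyz
  simp only [mul_add, coeff_add, coeff_mul_monomial', mexp_le, mexp_sub, MvPolynomial.coeff_zero, Nat.reduceLeDiff, Nat.reduceSub, and_true, true_and, and_false, false_and, and_self, if_true, if_false, reduceIte, mul_zero, zero_mul, add_zero, zero_add] at E1_15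
  have E1_16 := congrArg (coeff (mexp 2 1 4)) hsyz
  simp only [mul_add, coeff_add, coeff_mul_monomial', mexp_le, mexp_sub, MvPolynomial.coeff_zero, Nat.reduceLeDiff, Nat.reduceSub, and_true, true_and, and_false, false_and, and_self, if_true, if_false, reduceIte, mul_zero, zero_mul, add_zero, zero_add] at E1_16
  have E1_21 := congrArg (coeff (mexp 3 0 4)) hsyz
  simp only [mul_add, coeff_add, coeff_mul_monomial', mexp_le, mexp_sub, MvPolynomial.coeff_zero, Nat.reduceLeDiff, Nat.reduceSub, and_true, true_and, and_false, false_and, and_self, if_true, if_false, reduceIte, mul_zero, zero_mul, add_zero, zero_add] at E1_21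
  have E2_3 := congrArg (coeff (mexp 0 3 5)) hsyz
  simp only [mul_add, coeff_add, coeff_mul_monomial', mexp_le, mexp_sub, MvPolynomial.coeff_zero, Nat.reduceLeDiff, Nat.reduceSub, and_true, true_and, and_false, false_and, and_self, if_true, if_false, reduceIte, mul_zero, zero_mul, add_zero, zero_add] at E2_3
  have E2_4 := congrArg (coeff (mexp 0 4 4)) hsyz
  simp only [mul_add, coeff_add, coeff_mul_monomial', mexp_le, mexp_sub, MvPolynomial.coeff_zero, Nat.reduceLeDiff, Nat.reduceSub, and_true, true_and, and_false, false_and, and_self, if_true, if_false, reduceIte, mul_zero, zero_mul, add_zero, zero_add] at E2_4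
  have E2_5 := congrArg (coeff (mexp 0 5 3)) hsyz
  simp only [mul_add, coeff_add, coeff_mul_monomial', mexp_le, mexp_sub, MvPolynomial.coeff_zero, Nat.reduceLeDiff, Nat.reduceSub, and_true, true_and, and_false, false_and, and_self, if_true, if_false, reduceIte, mul_zero, zero_mul, add_zero, zero_add] at E2_5
  have E2_6 := congrArg (coeff (mexp 0 6 2)) hsyz
  simp only [mul_add, coeff_add, coeff_mul_monomial', mexp_le, mexp_sub, MvPolynomial.coeff_zero, Nat.reduceLeDiff, Nat.reduceSub, and_true, true_and, and_false, false_and, and_self, if_true, if_false, reduceIte, mul_zero, zero_mul, add_zero, zero_add] at E2_6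
  have E2_7 := congrArg (coeff (mexp 0 7 1)) hsyz
  simp only [mul_add, coeff_add, coeff_mul_monomial', mexp_le, mexp_sub, MvPolynomial.coeff_zero, Nat.reduceLeDiff, Nat.reduceSub, and_true, true_and, and_false, false_and, and_self, if_true, if_false, reduceIte, mul_zero, zero_mul, add_zero, zero_add] at E2_7
  have E2_8 := congrArg (coeff (mexp 0 8 0)) hsyz
  simp only [mul_add, coeff_add, coeff_mul_monomial', mexp_le, mexp_sub, MvPolynomial.coeff_zero, Nat.reduceLeDiff, Nat.reduceSub, and_true, true_and, and_false, false_and, and_self, if_true, if_false, reduceIte, mul_zero, zero_mul, add_zero, zero_add] at E2_8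
  have E2_11 := congrArg (coeff (mexp 1 2 5)) hsyz
  simp only [mul_add, coeff_add, coeff_mul_monomial', mexp_le, mexp_sub, MvPolynomial.coeff_zero, Nat.reduceLeDiff, Nat.reduceSub, and_true, true_and, and_false, false_and, and_self, if_true, if_false, reduceIte, mul_zero, zero_mul, add_zero, zero_add] at E2_11
  have E2_12 := congrArg (coeff (mexp 1 3 4)) hsyz
  simp only [mul_add, coeff_add, coeff_mul_monomial', mexp_le, mexp_sub, MvPolynomial.coeff_zero, Nat.reduceLeDiff, Nat.reduceSub, and_true, true_and, and_false, false_and, and_self, if_true, if_false, reduceIte, mul_zero, zero_mul, add_zero, zero_add] at E2_12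
  have E2_13 := congrArg (coeff (mexp 1 4 3)) hsyz
  simp only [mul_add, coeff_add, coeff_mul_monomial', mexp_le, mexp_sub, MvPolynomial.coeff_zero, Nat.reduceLeDiff, Nat.reduceSub, and_true, true_and, and_false, false_and, and_self, if_true, if_false, reduceIte, mul_zero, zero_mul, add_zero, zero_add] at E2_13
  have E2_14 := congrArg (coeff (mexp 1 5 2)) hsyz
  simp only [mul_add, coeff_add, coeff_mul_monomial', mexp_le, mexp_sub, MvPolynomial.coeff_zero, Nat.reduceLeDiff, Nat.reduceSub, and_true, true_and, and_false, false_and, and_self, if_true, if_false, reduceIte, mul_zero, zero_mul, add_zero, zero_add] at E2_14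
  have E2_17 := congrArg (coeff (mexp 2 0 6)) hsyz
  simp only [mul_add, coeff_add, coeff_mul_monomial', mexp_le, mexp_sub, MvPolynomial.coeff_zero, Nat.reduceLeDiff, Nat.reduceSub, and_true, true_and, and_false, false_and, and_self, if_true, if_false, reduceIte, mul_zero, zero_mul, add_zero, zero_add] at E2_17
  have E2_18 := congrArg (coeff (mexp 2 1 5)) hsyz
  simp only [mul_add, coeff_add, coeff_mul_monomial', mexp_le, mexp_sub, MvPolynomial.coeff_zero, Nat.reduceLeDiff, Nat.reduceSub, and_true, true_and, and_false, false_and, and_self, if_true, if_false, reduceIte, mul_zero, zero_mul, add_zero, zero_add] at E2_18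
  have E2_19 := congrArg (coeff (mexp 2 2 4)) hsyz
  simp only [mul_add, coeff_add, coeff_mul_monomial', mexp_le, mexp_sub, MvPolynomial.coeff_zero, Nat.reduceLeDiff, Nat.reduceSub, and_true, true_and, and_false, false_and, and_self, if_true, if_false, reduceIte, mul_zero, zero_mul, add_zero, zero_add] at E2_19
  have E2_20 := congrArg (coeff (mexp 2 3 3)) hsyz
  simp only [mul_add, coeff_add, coeff_mul_monomial', mexp_le, mexp_sub, MvPolynomial.coeff_zero, Nat.reduceLeDiff, Nat.reduceSub, and_true, true_and, and_false, false_and, and_self, if_true, if_false, reduceIte, mul_zero, zero_mul, add_zero, zero_add] at E2_20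
  have E2_21 := congrArg (coeff (mexp 2 4 2)) hsyz
  simp only [mul_add, coeff_add, coeff_mul_monomial', mexp_le, mexp_sub, MvPolynomial.coeff_zero, Nat.reduceLeDiff, Nat.reduceSub, and_true, true_and, and_false, false_and, and_self, if_true, if_false, reduceIte, mul_zero, zero_mul, add_zero, zero_add] at E2_21
  have E2_24 := congrArg (coeff (mexp 3 0 5)) hsyz
  simp only [mul_add, coeff_add, coeff_mul_monomial', mexp_le, mexp_sub, MvPolynomial.coeff_zero, Nat.reduceLeDiff, Nat.reduceSub, and_true, true_and, and_false, false_and, and_self, if_true, if_false, reduceIte, mul_zero, zero_mul, add_zero, zero_add] at E2_24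
  have E2_25 := congrArg (coeff (mexp 3 1 4)) hsyz
  simp only [mul_add, coeff_add, coeff_mul_monomial', mexp_le, mexp_sub, MvPolynomial.coeff_zero, Nat.reduceLeDiff, Nat.reduceSub, and_true, true_and, and_false, false_and, and_self, if_true, if_false, reduceIte, mul_zero, zero_mul, add_zero, zero_add] at E2_25
  have E2_30 := congrArg (coeff (mexp 4 0 4)) hsyz
  simp only [mul_add, coeff_add, coeff_mul_monomial', mexp_le, mexp_sub, MvPolynomial.coeff_zero, Nat.reduceLeDiff, Nat.reduceSub, and_true, true_and, and_false, false_and, and_self, if_true, if_false, reduceIte, mul_zero, zero_mul, add_zero, zero_add] at E2_30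
  have hA000 : coeff (mexp 0 0 0) a = 0 := by
    linear_combination ((1/3 : ℂ)) * E0_13
  have hB000 : coeff (mexp 0 0 0) b = 0 := by
    linear_combination ((1/3 : ℂ)) * E0_2
  have hC000 : coeff (mexp 0 0 0) c = 0 := by
    linear_combination ((-1/3 : ℂ)) * E0_2 + ((1/4 : ℂ)) * E0_3
  have hA100 : coeff (mexp 1 0 0) a = 0 := by
    linear_combination ((-71/294 : ℂ)) * E1_3 + ((-6/49 : ℂ)) * E1_4 + ((31/294 : ℂ)) * E1_5 + ((17/98 : ℂ)) * E1_7 + ((1/3 : ℂ)) * E1_21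
  have hA010 : coeff (mexp 0 1 0) a = 0 := by
    linear_combination ((-1/3 : ℂ)) * E1_15 + ((1/3 : ℂ)) * E1_16
  have hA001 : coeff (mexp 0 0 1) a = 0 := by
    linear_combination ((1/3 : ℂ)) * E1_15
  have hB100 : coeff (mexp 1 0 0) b = 0 := by
    linear_combination ((1/3 : ℂ)) * E1_10
  have hB010 : coeff (mexp 0 1 0) b = 0 := by
    linear_combination ((1/49 : ℂ)) * E1_3 + ((-4/147 : ℂ)) * E1_4 + ((-2/147 : ℂ)) * E1_5 + ((22/147 : ℂ)) * E1_7
  have hB001 : coeff (mexp 0 0 1) b = 0 := by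
    linear_combination ((1/14 : ℂ)) * E1_3 + ((-2/21 : ℂ)) * E1_4 + ((5/42 : ℂ)) * E1_5 + ((1/42 : ℂ)) * E1_7
  have hC100 : coeff (mexp 1 0 0) c = 0 := by
    linear_combination ((-1/3 : ℂ)) * E1_10 + ((1/4 : ℂ)) * E1_11
  have hC010 : coeff (mexp 0 1 0) c = 0 := by
    linear_combination ((-1/7 : ℂ)) * E1_3 + ((4/21 : ℂ)) * E1_4 + ((2/21 : ℂ)) * E1_5 + ((-1/21 : ℂ)) * E1_7
  have hC001 : coeff (mexp 0 0 1) c = 0 := by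
    linear_combination ((8/49 : ℂ)) * E1_3 + ((17/147 : ℂ)) * E1_4 + ((-16/147 : ℂ)) * E1_5 + ((-20/147 : ℂ)) * E1_7
  have hA200 : coeff (mexp 2 0 0) a = 0 := by
    linear_combination ((17/7 : ℂ)) * E2_11 + ((-16/21 : ℂ)) * E2_12 + ((4/7 : ℂ)) * E2_13 + ((-16/21 : ℂ)) * E2_14 + ((1/3 : ℂ)) * E2_30
  have hA110 : coeff (mexp 1 1 0) a = 0 := by
    linear_combination ((11/126 : ℂ)) * E2_3 + ((-5/63 : ℂ)) * E2_4 + ((-11/42 : ℂ)) * E2_5 + ((2/9 : ℂ)) * E2_6 + ((-29/126 : ℂ)) * E2_7 + ((8/21 : ℂ)) * E2_8 + ((-1/3 : ℂ)) * E2_24 + ((1/3 : ℂ)) * E2_25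
  have hA101 : coeff (mexp 1 0 1) a = 0 := by
    linear_combination ((-5/63 : ℂ)) * E2_3 + ((-17/63 : ℂ)) * E2_4 + ((5/21 : ℂ)) * E2_5 + ((-13/63 : ℂ)) * E2_6 + ((23/63 : ℂ)) * E2_7 + ((-1/3 : ℂ)) * E2_8 + ((1/3 : ℂ)) * E2_24
  have hA020 : coeff (mexp 0 2 0) a = 0 := by
    linear_combination ((10/3 : ℂ)) * E2_17 + ((-4/1 : ℂ)) * E2_18 + ((4/3 : ℂ)) * E2_19 + ((-1/1 : ℂ)) * E2_20 + ((4/3 : ℂ)) * E2_21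
  have hA011 : coeff (mexp 0 1 1) a = 0 := by
    linear_combination ((-1/3 : ℂ)) * E2_17 + ((1/3 : ℂ)) * E2_18
  have hA002 : coeff (mexp 0 0 2) a = 0 := by
    linear_combination ((1/3 : ℂ)) * E2_17
  have hB200 : coeff (mexp 2 0 0) b = 0 := by
    linear_combination ((-3/1 : ℂ)) * E2_17 + ((11/3 : ℂ)) * E2_18 + ((-1/1 : ℂ)) * E2_19 + ((1/1 : ℂ)) * E2_20 + ((-4/3 : ℂ)) * E2_21
  have hB110 : coeff (mexp 1 1 0) b = 0 := by
    linear_combination ((44/21 : ℂ)) * E2_11 + ((-3/7 : ℂ)) * E2_12 + ((4/7 : ℂ)) * E2_13 + ((-16/21 : ℂ)) * E2_14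
  have hB101 : coeff (mexp 1 0 1) b = 0 := by
    linear_combination ((1/3 : ℂ)) * E2_11
  have hB020 : coeff (mexp 0 2 0) b = 0 := by
    linear_combination ((11/126 : ℂ)) * E2_3 + ((-5/63 : ℂ)) * E2_4 + ((1/14 : ℂ)) * E2_5 + ((-1/9 : ℂ)) * E2_6 + ((13/126 : ℂ)) * E2_7 + ((1/21 : ℂ)) * E2_8
  have hB011 : coeff (mexp 0 1 1) b = 0 := by
    linear_combination ((-5/63 : ℂ)) * E2_3 + ((4/63 : ℂ)) * E2_4 + ((-2/21 : ℂ)) * E2_5 + ((8/63 : ℂ)) * E2_6 + ((2/63 : ℂ)) * E2_7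
  have hB002 : coeff (mexp 0 0 2) b = 0 := by
    linear_combination ((1/3 : ℂ)) * E2_3 + ((-1/3 : ℂ)) * E2_4 + ((1/3 : ℂ)) * E2_5 + ((-1/3 : ℂ)) * E2_6 + ((1/3 : ℂ)) * E2_7 + ((-1/3 : ℂ)) * E2_8
  have hC200 : coeff (mexp 2 0 0) c = 0 := by
    linear_combination ((-2/3 : ℂ)) * E2_18 + ((1/3 : ℂ)) * E2_21
  have hC110 : coeff (mexp 1 1 0) c = 0 := by
    linear_combination ((-2/3 : ℂ)) * E2_11 + ((1/3 : ℂ)) * E2_14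
  have hC101 : coeff (mexp 1 0 1) c = 0 := by
    linear_combination ((-40/21 : ℂ)) * E2_11 + ((4/7 : ℂ)) * E2_12 + ((-3/7 : ℂ)) * E2_13 + ((4/7 : ℂ)) * E2_14
  have hC020 : coeff (mexp 0 2 0) c = 0 := by
    linear_combination ((-11/18 : ℂ)) * E2_3 + ((5/9 : ℂ)) * E2_4 + ((-1/2 : ℂ)) * E2_5 + ((7/9 : ℂ)) * E2_6 + ((-13/18 : ℂ)) * E2_7 + ((2/3 : ℂ)) * E2_8
  have hC011 : coeff (mexp 0 1 1) c = 0 := by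
    linear_combination ((2/63 : ℂ)) * E2_3 + ((2/63 : ℂ)) * E2_4 + ((5/21 : ℂ)) * E2_5 + ((-2/9 : ℂ)) * E2_6 + ((10/63 : ℂ)) * E2_7 + ((-2/7 : ℂ)) * E2_8
  have hC002 : coeff (mexp 0 0 2) c = 0 := by
    linear_combination ((-1/42 : ℂ)) * E2_3 + ((2/7 : ℂ)) * E2_4 + ((-11/42 : ℂ)) * E2_5 + ((5/21 : ℂ)) * E2_6 + ((-5/14 : ℂ)) * E2_7 + ((1/3 : ℂ)) * E2_8
  refine ⟨?_, ?_, ?_⟩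
  · apply MvPolynomial.ext
    intro m
    rw [MvPolynomial.coeff_zero]
    by_cases hm : m 0 + m 1 + m 2 ≤ 2
    · have hex : ∃ i j k, i + j + k ≤ 2 ∧ m = mexp i j k := ⟨m 0, m 1, m 2, hm, eq_mexp m⟩
      obtain ⟨i, j, k, hm2, rfl⟩ := hex
      have hi : i ≤ 2 := by omega
      have hj : j ≤ 2 := by omega
      have hk : k ≤ 2 := by omega
      interval_cases i <;> interval_cases j <;> interval_cases k <;> first | assumption | omega
    · apply coeff_eq_zero_of_totalDegree_lt
      rw [support_sum]
      omega
  · apply MvPolynomial.ext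
    intro m
    rw [MvPolynomial.coeff_zero]
    by_cases hm : m 0 + m 1 + m 2 ≤ 2
    · have hex : ∃ i j k, i + j + k ≤ 2 ∧ m = mexp i j k := ⟨m 0, m 1, m 2, hm, eq_mexp m⟩
      obtain ⟨i, j, k, hm2, rfl⟩ := hex
      have hi : i ≤ 2 := by omega
      have hj : j ≤ 2 := by omega
      have hk : k ≤ 2 := by omega
      interval_cases i <;> interval_cases j <;> interval_cases k <;> first | assumption | omega
    · apply coeff_eq_zero_of_totalDegree_lt
      rw [support_sum]
      omega
  · apply MvPolynomial.ext
    intro m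
    rw [MvPolynomial.coeff_zero]
    by_cases hm : m 0 + m 1 + m 2 ≤ 2
    · have hex : ∃ i j k, i + j + k ≤ 2 ∧ m = mexp i j k := ⟨m 0, m 1, m 2, hm, eq_mexp m⟩
      obtain ⟨i, j, k, hm2, rfl⟩ := hex
      have hi : i ≤ 2 := by omega
      have hj : j ≤ 2 := by omega
      have hk : k ≤ 2 := by omega
      interval_cases i <;> interval_cases j <;> interval_cases k <;> first | assumption | omega
    · apply coeff_eq_zero_of_totalDegree_lt
      rw [support_sum]
      omega
end
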